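/- Let H be a complex Hilbert space, let p ∈ B(H) be an orthogonal projection of rank 1, and let k be a natural number with 0 < k < dim H. Then there exist k+1 orthogonal projections P₁, ..., P_{k+1} in B(H), each of rank k and pairwise commuting (and each commuting with p), such that p = (1/k) · ∑_{j=2}^{k+1} P_j − ((k−1)/k) · P₁. -/

import Mathlib

/-!
Write `p = rankOne e e` with `‖e‖ = 1` and extend `e` by Gram–Schmidt to an orthonormal family
`f 0 = e, f 1, …, f k`. With `Q i = rankOne (f i) (f i)`, the operators `P j = ∑ i ≠ j, Q i` are
commuting orthogonal projections of rank `k`, and since `P j = S - Q j` for `S = ∑ i, Q i`, the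
combination `(1/k) ∑ j ≠ 0, P j - ((k-1)/k) P 0` collapses to `Q 0 = p`.
-/

open scoped InnerProductSpace

variable {H : Type*} [NormedAddCommGroup H] [InnerProductSpace ℂ H] [CompleteSpace H]

/-- `P` is an orthogonal projection of rank `k` on `H`. -/
def IsRankProj (k : ℕ) (P : H →L[ℂ] H) : Prop :=
  IsSelfAdjoint P ∧ P * P = P ∧ Module.rank ℂ (LinearMap.range (P : H →ₗ[ℂ] H)) = k

open Finset InnerProductSpace

theorem exists_linearIndependent_fin_succ_of_lt_rank {R M : Type*} [DivisionRing R]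
    [AddCommGroup M] [Module R M] {x : M} (hx : x ≠ 0) :
    ∀ {n : ℕ}, (n : Cardinal) < Module.rank R M →
      ∃ v : Fin (n + 1) → M, LinearIndependent R v ∧ v 0 = x
  | 0, _ => ⟨![x], LinearIndependent.of_subsingleton (ι := Fin 1) 0 hx, rfl⟩
  | n + 1, hn => by
    obtain ⟨v, hv, hv0⟩ :=
      exists_linearIndependent_fin_succ_of_lt_rank hx ((Nat.cast_lt.mpr n.lt_succ_self).trans hn)
    obtain ⟨y, hy⟩ := exists_linearIndependent_snoc_of_lt_rank hv hn
    exact ⟨Fin.snoc v y, hy, (Fin.snoc_castSucc (i := 0) ..).trans hv0⟩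

section InnerProductSpace

variable {𝕜 E : Type*} [RCLike 𝕜] [NormedAddCommGroup E] [InnerProductSpace 𝕜 E]

theorem exists_orthonormal_fin_succ_of_lt_rank {e : E} (he : ‖e‖ = 1) {n : ℕ}
    (hn : (n : Cardinal) < Module.rank 𝕜 E) :
    ∃ f : Fin (n + 1) → E, Orthonormal 𝕜 f ∧ f 0 = e := by
  obtain ⟨v, hv, hv0⟩ := exists_linearIndependent_fin_succ_of_lt_rank (R := 𝕜)
    (norm_ne_zero_iff.mp (he.symm ▸ one_ne_zero)) hn
  refine ⟨gramSchmidtNormed 𝕜 v, gramSchmidtNormed_orthonormal hv, ?_⟩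
  rw [gramSchmidtNormed, ← bot_eq_zero, gramSchmidt_bot, bot_eq_zero, hv0, he]
  simp

theorem Submodule.exists_norm_eq_one_eq_span_singleton_of_rank_eq_one {S : Submodule 𝕜 E}
    (hS : Module.rank 𝕜 S = 1) : ∃ e, ‖e‖ = 1 ∧ S = 𝕜 ∙ e := by
  obtain ⟨w, hwS, hw⟩ := exists_mem_ne_zero_of_rank_pos (hS ▸ zero_lt_one)
  have he : ‖(‖w‖ : 𝕜)⁻¹ • w‖ = 1 := norm_smul_inv_norm hw
  refine ⟨_, he, eq_span_singleton_of_mem_of_finrank_eq_one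
    (Module.rank_eq_one_iff_finrank_eq_one.mp hS) (S.smul_mem _ hwS) ?_⟩
  exact norm_ne_zero_iff.mp (he.symm ▸ one_ne_zero)

theorem IsStarProjection.exists_eq_rankOne_of_rank_range_eq_one [CompleteSpace E]
    {p : E →L[𝕜] E} (hp : IsStarProjection p) (hrank : Module.rank 𝕜 p.range = 1) :
    ∃ e, ‖e‖ = 1 ∧ p = rankOne 𝕜 e e := by
  obtain ⟨K, _, rfl⟩ := isStarProjection_iff_eq_starProjection.mp hp
  rw [Submodule.range_starProjection] at hrank
  obtain ⟨e, he, rfl⟩ := Submodule.exists_norm_eq_one_eq_span_singleton_of_rank_eq_one hrank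
  exact ⟨e, he, by ext x; simp [Submodule.starProjection_unit_singleton 𝕜 he]⟩

namespace Orthonormal

variable {ι : Type*} [DecidableEq ι] {f : ι → E} (hf : Orthonormal 𝕜 f)
include hf

theorem rankOne_mul_rankOne (i j : ι) :
    rankOne 𝕜 (f i) (f i) * rankOne 𝕜 (f j) (f j) =
      if i = j then rankOne 𝕜 (f i) (f i) else 0 := by
  rw [ContinuousLinearMap.mul_def, rankOne_comp_rankOne, orthonormal_iff_ite.mp hf]
  split_ifs with hij
  · rw [hij, one_smul]
  · rw [zero_smul]

theorem commute_rankOne (i j : ι) :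
    Commute (rankOne 𝕜 (f i) (f i)) (rankOne 𝕜 (f j) (f j)) := by
  obtain rfl | hij := eq_or_ne i j
  · exact .refl _
  · rw [Commute, SemiconjBy, hf.rankOne_mul_rankOne, hf.rankOne_mul_rankOne, if_neg hij,
      if_neg hij.symm]

theorem isStarProjection_sum_rankOne [CompleteSpace E] (s : Finset ι) :
    IsStarProjection (∑ i ∈ s, rankOne 𝕜 (f i) (f i)) := by
  refine ⟨?_, isSelfAdjoint_sum s fun i _ => (isStarProjection_rankOne_self (hf.1 i)).2⟩
  rw [IsIdempotentElem, sum_mul_sum]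
  refine sum_congr rfl fun i hi => ?_
  simp only [hf.rankOne_mul_rankOne, sum_ite_eq, if_pos hi]

theorem sum_rankOne_apply_of_mem {s : Finset ι} {i : ι} (hi : i ∈ s) :
    (∑ l ∈ s, rankOne 𝕜 (f l) (f l)) (f i) = f i := by
  simp [orthonormal_iff_ite.mp hf, hi]

theorem range_sum_rankOne (s : Finset ι) :
    (∑ i ∈ s, rankOne 𝕜 (f i) (f i)).range = Submodule.span 𝕜 (f '' s) := by
  apply le_antisymm
  · rintro _ ⟨x, rfl⟩
    simp only [ContinuousLinearMap.coe_coe, _root_.sum_apply, rankOne_apply]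
    exact Submodule.sum_mem _ fun i hi =>
      Submodule.smul_mem _ _ (Submodule.subset_span ⟨i, hi, rfl⟩)
  · rw [Submodule.span_le]
    rintro _ ⟨i, hi, rfl⟩
    exact ⟨f i, hf.sum_rankOne_apply_of_mem hi⟩

theorem rank_range_sum_rankOne (s : Finset ι) :
    Module.rank 𝕜 (∑ i ∈ s, rankOne 𝕜 (f i) (f i)).range = s.card := by
  have hfs : LinearIndependent 𝕜 fun i : (s : Set ι) => f i :=
    hf.linearIndependent.comp _ Subtype.val_injective
  rw [hf.range_sum_rankOne, Set.image_eq_range, rank_span hfs]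
  simpa using Cardinal.mk_range_eq_of_injective hfs.injective

end Orthonormal

end InnerProductSpace

theorem Fin.apply_zero_eq_combination_sum_erase {K V : Type*} [Field K] [CharZero K]
    [AddCommGroup V] [Module K V] {k : ℕ} (hk : k ≠ 0) (Q : Fin (k + 1) → V) :
    Q 0 = ((1 : K) / k) • ∑ j ∈ univ.erase 0, ∑ i ∈ univ.erase j, Q i
      - (((k : K) - 1) / k) • ∑ i ∈ univ.erase 0, Q i := by
  have hk' : (k : K) ≠ 0 := Nat.cast_ne_zero.mpr hk
  simp only [sum_erase_eq_sub (mem_univ _), sum_sub_distrib, sum_const,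
    ← Nat.cast_smul_eq_nsmul K]
  match_scalars <;> field_simp <;> ring

theorem IsRankProj.exists_eq_rankOne {p : H →L[ℂ] H} (hp : IsRankProj 1 p) :
    ∃ e, ‖e‖ = 1 ∧ p = rankOne ℂ e e :=
  IsStarProjection.exists_eq_rankOne_of_rank_range_eq_one ⟨hp.2.1, hp.1⟩ (hp.2.2.trans Nat.cast_one)

theorem Orthonormal.isRankProj_sum_rankOne {ι : Type*} [DecidableEq ι] {f : ι → H}
    (hf : Orthonormal ℂ f) (s : Finset ι) :
    IsRankProj s.card (∑ i ∈ s, rankOne ℂ (f i) (f i)) :=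
  ⟨(hf.isStarProjection_sum_rankOne s).2, (hf.isStarProjection_sum_rankOne s).1,
    hf.rank_range_sum_rankOne s⟩

theorem rank_one_proj_combination_of_rank_k
    (k : ℕ) (hk : 0 < k) (hkdim : (k : Cardinal) < Module.rank ℂ H)
    (p : H →L[ℂ] H) (hp : IsRankProj 1 p) :
    ∃ P : Fin (k + 1) → (H →L[ℂ] H),
      (∀ j, IsRankProj k (P j)) ∧
      (∀ i j, Commute (P i) (P j)) ∧
      (∀ j, Commute p (P j)) ∧
      p = ((1 : ℂ) / k) • (∑ j ∈ Finset.univ.erase 0, P j)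
            - (((k : ℂ) - 1) / k) • P 0 := by
  obtain ⟨e, he, rfl⟩ := hp.exists_eq_rankOne
  obtain ⟨f, hf, rfl⟩ := exists_orthonormal_fin_succ_of_lt_rank he hkdim
  refine ⟨fun j => ∑ i ∈ univ.erase j, rankOne ℂ (f i) (f i), fun j => ?_,
    fun i j => .sum_left _ _ _ fun a _ => .sum_right _ _ _ fun b _ => hf.commute_rankOne a b,
    fun j => .sum_right _ _ _ fun b _ => hf.commute_rankOne 0 b,
    Fin.apply_zero_eq_combination_sum_erase hk.ne' fun i => rankOne ℂ (f i) (f i)⟩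
  simpa [card_erase_of_mem] using hf.isRankProj_sum_rankOne (univ.erase j)
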